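/- Let f : ℝ^{n×m} → ℝ be continuously differentiable, λ > 0, μ > 0. Fix (Ū, V̄) ∈ ℝ^{n×r} × ℝ^{m×r}. Then for every direction (G, H) ∈ ℝ^{n×r} × ℝ^{m×r}, the subderivative of Φ_{λ,μ} at (Ū, V̄) satisfies: dΦ_{λ,μ}(Ū,V̄)(G,H) = ⟨∇f(Ū V̄ᵀ)V̄ + μŪ, G⟩ + ⟨(∇f(Ū V̄ᵀ))ᵀŪ + μV̄, H⟩ if J_G ⊆ J_Ū and J_H ⊆ J_V̄, and dΦ_{λ,μ}(Ū,V̄)(G,H) = +∞ otherwise. Consequently, if dΦ_{λ,μ}(Ū,V̄)(G,H) < 0, then (G, H) is a descent direction of F_μ(U,V) = f(UVᵀ) + (μ/2)(‖U‖_F² + ‖V‖_F²) at (Ū,V̄), i.e. ⟨∇F_μ(Ū,V̄),(G,H)⟩ < 0. -/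

import Mathlib

open Filter Topology Matrix

attribute [local instance] Matrix.frobeniusSeminormedAddCommGroup
  Matrix.frobeniusNormedAddCommGroup Matrix.frobeniusNormedSpace

/-- The Frobenius (trace) inner product `⟨A,B⟩ = trace(AᵀB) = ∑ᵢⱼ Aᵢⱼ Bᵢⱼ` on matrices. -/
noncomputable def frobInner {α β : Type*} [Fintype α] [Fintype β] (A B : Matrix α β ℝ) : ℝ :=
  ∑ i, ∑ j, A i j * B i j

/-- The column `ℓ_{2,0}`-norm: the number of nonzero columns. -/
noncomputable def l20 {α β : Type*} [Fintype α] [Fintype β] (A : Matrix α β ℝ) : ℕ :=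
  {j : β | (fun i => A i j) ≠ 0}.ncard

/-- `Φ_{λ,μ}(U,V) = f(UVᵀ) + (μ/2)(‖U‖_F² + ‖V‖_F²) + λ(‖U‖_{2,0} + ‖V‖_{2,0})`. -/
noncomputable def Phi {n m r : ℕ} (f : Matrix (Fin n) (Fin m) ℝ → ℝ) (lam mu : ℝ)
    (U : Matrix (Fin n) (Fin r) ℝ) (V : Matrix (Fin m) (Fin r) ℝ) : ℝ :=
  f (U * Vᵀ) + mu / 2 * (frobInner U U + frobInner V V) + lam * ((l20 U : ℝ) + (l20 V : ℝ))

/-- The subderivative `dh(x)(w) = liminf_{t↓0, w'→w} (h(x + t w') − h(x))/t`,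
valued in `[−∞, +∞]`. -/
noncomputable def subderiv {E : Type*} [AddCommGroup E] [Module ℝ E] [TopologicalSpace E]
    (h : E → ℝ) (x w : E) : EReal :=
  Filter.liminf (fun p : ℝ × E => (((h (x + p.1 • p.2) - h x) / p.1 : ℝ) : EReal))
    ((𝓝[>] (0 : ℝ)) ×ˢ 𝓝 w)

/-!
Split `Φ_{λ,μ} = F_μ + λ(‖U‖_{2,0} + ‖V‖_{2,0})`. The smooth part `F_μ` is Fréchet differentiable,
so its difference quotients converge to `⟨∇F_μ(Ū,V̄), (G,H)⟩` even when the direction varies too.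
The penalty cannot decrease near `(Ū,V̄)`, because nonzero columns stay nonzero. If `J_G ⊆ J_Ū` and
`J_H ⊆ J_V̄`, moving exactly along `(G,H)` does not increase it either, so the subderivative is the
derivative of `F_μ`. Otherwise some column is switched on by every nearby perturbation, the penalty
jumps by at least `λ`, and the quotient is at least `λ/t + O(1) → +∞`.
-/

section Frobenius

variable {α β γ : Type*} [Fintype α] [Fintype β] [Fintype γ]

theorem frobInner_comm (A B : Matrix α β ℝ) : frobInner A B = frobInner B A := by
  simp only [frobInner, mul_comm]

theorem frobInner_add_left (A B C : Matrix α β ℝ) :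
    frobInner (A + B) C = frobInner A C + frobInner B C := by
  simp only [frobInner, Matrix.add_apply, add_mul, Finset.sum_add_distrib]

theorem frobInner_smul_left (c : ℝ) (A B : Matrix α β ℝ) :
    frobInner (c • A) B = c * frobInner A B := by
  simp only [frobInner, Matrix.smul_apply, smul_eq_mul, Finset.mul_sum, mul_assoc]

theorem frobInner_add_right (A B C : Matrix α β ℝ) :
    frobInner A (B + C) = frobInner A B + frobInner A C := by
  simp only [frobInner_comm A, frobInner_add_left]

theorem frobInner_transpose (A B : Matrix α β ℝ) : frobInner Aᵀ Bᵀ = frobInner A B :=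
  Finset.sum_comm

theorem frobInner_mul_transpose_eq_mul (A : Matrix α β ℝ) (B : Matrix β γ ℝ) (C : Matrix α γ ℝ) :
    frobInner A (C * Bᵀ) = frobInner (A * B) C := by
  simp only [frobInner, Matrix.mul_apply, Matrix.transpose_apply, Finset.mul_sum, Finset.sum_mul]
  refine Finset.sum_congr rfl fun i _ => ?_
  rw [Finset.sum_comm]
  exact Finset.sum_congr rfl fun k _ => Finset.sum_congr rfl fun j _ => by ring

theorem frobInner_mul_transpose_eq_transpose_mul (A : Matrix α β ℝ) (C : Matrix α γ ℝ)
    (B : Matrix β γ ℝ) :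
    frobInner A (C * Bᵀ) = frobInner (Aᵀ * C) B := by
  rw [← frobInner_transpose, Matrix.transpose_mul, Matrix.transpose_transpose,
    frobInner_mul_transpose_eq_mul]

noncomputable def frobInnerL : Matrix α β ℝ →L[ℝ] Matrix α β ℝ →L[ℝ] ℝ :=
  LinearMap.toContinuousBilinearMap <|
    LinearMap.mk₂ ℝ frobInner frobInner_add_left frobInner_smul_left frobInner_add_right
      fun c A B => by simp only [frobInner_comm A, frobInner_smul_left, smul_eq_mul]

noncomputable def mulTransposeL : Matrix α γ ℝ →L[ℝ] Matrix β γ ℝ →L[ℝ] Matrix α β ℝ :=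
  LinearMap.toContinuousBilinearMap <|
    LinearMap.mk₂ ℝ (fun A B => A * Bᵀ) (fun _ _ _ => Matrix.add_mul _ _ _)
      (fun _ _ _ => Matrix.smul_mul _ _ _)
      (fun _ _ _ => by rw [Matrix.transpose_add, Matrix.mul_add])
      (fun _ _ _ => by rw [Matrix.transpose_smul, Matrix.mul_smul])

noncomputable def Fmu (f : Matrix α β ℝ → ℝ) (mu : ℝ) (U : Matrix α γ ℝ) (V : Matrix β γ ℝ) : ℝ :=
  f (U * Vᵀ) + mu / 2 * (frobInner U U + frobInner V V)

theorem hasFDerivAt_Fmu {f : Matrix α β ℝ → ℝ} {D : Matrix α β ℝ} (mu : ℝ) {U : Matrix α γ ℝ}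
    {V : Matrix β γ ℝ}
    (hf : HasFDerivAt f (frobInnerL D) (U * Vᵀ)) :
    HasFDerivAt (fun p : Matrix α γ ℝ × Matrix β γ ℝ => Fmu f mu p.1 p.2)
      ((frobInnerL (D * V + mu • U)).coprod (frobInnerL (Dᵀ * U + mu • V))) (U, V) := by
  have hfst := hasFDerivAt_fst (𝕜 := ℝ) (p := (U, V))
  have hsnd := hasFDerivAt_snd (𝕜 := ℝ) (p := (U, V))
  have hmul := mulTransposeL.hasFDerivAt_of_bilinear hfst hsnd
  have hU := frobInnerL.hasFDerivAt_of_bilinear hfst hfst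
  have hV := frobInnerL.hasFDerivAt_of_bilinear hsnd hsnd
  refine ((hf.comp (U, V) hmul).add ((hU.add hV).const_mul (mu / 2))).congr_fderiv ?_
  refine ContinuousLinearMap.ext fun ⟨G, H⟩ => ?_
  change frobInner D (U * Hᵀ + G * Vᵀ)
      + mu / 2 * (frobInner U G + frobInner G U + (frobInner V H + frobInner H V))
    = frobInner (D * V + mu • U) G + frobInner (Dᵀ * U + mu • V) H
  rw [frobInner_add_right, frobInner_mul_transpose_eq_transpose_mul D U,
    frobInner_mul_transpose_eq_mul D V, frobInner_add_left, frobInner_add_left,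
    frobInner_smul_left, frobInner_smul_left, frobInner_comm G, frobInner_comm H]
  ring

end Frobenius

section Subderivative

theorem tendsto_add_smul_prod {E : Type*} [AddCommGroup E] [Module ℝ E] [TopologicalSpace E]
    [ContinuousAdd E] [ContinuousSMul ℝ E] {l : Filter ℝ} (hl : l ≤ 𝓝 0) (x w : E) :
    Tendsto (fun p : ℝ × E => x + p.1 • p.2) (l ×ˢ 𝓝 w) (𝓝 x) := by
  simpa using
    tendsto_const_nhds.add ((tendsto_fst.mono_right hl).smul (tendsto_snd (f := l) (g := 𝓝 w)))

variable {E : Type*} [NormedAddCommGroup E] [NormedSpace ℝ E]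

theorem HasFDerivAt.tendsto_slope_prod {F : E → ℝ} {L : E →L[ℝ] ℝ} {x : E}
    (hF : HasFDerivAt F L x) (w : E) :
    Tendsto (fun p : ℝ × E => (F (x + p.1 • p.2) - F x) / p.1) (𝓝[≠] 0 ×ˢ 𝓝 w) (𝓝 (L w)) := by
  have hd : Tendsto (fun p : ℝ × E => p.1 • p.2) (𝓝[≠] 0 ×ˢ 𝓝 w) (𝓝 0) := by
    simpa using tendsto_add_smul_prod nhdsWithin_le_nhds (0 : E) w
  have hcd : Tendsto (fun p : ℝ × E => p.1⁻¹ • p.1 • p.2) (𝓝[≠] 0 ×ˢ 𝓝 w) (𝓝 w) := by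
    refine tendsto_snd.congr' ?_
    filter_upwards [tendsto_fst.eventually (self_mem_nhdsWithin (s := {(0:ℝ)}ᶜ))] with p hp
    rw [inv_smul_smul₀ hp]
  simpa [div_eq_inv_mul] using
    (hasFDerivWithinAt_univ.2 hF).lim hd (.of_forall fun _ => Set.mem_univ _) hcd

variable {F P : E → ℝ} {L : E →L[ℝ] ℝ} {x w : E}

theorem subderiv_add_eq_of_hasFDerivAt (hF : HasFDerivAt F L x) (hP : ∀ᶠ y in 𝓝 x, P x ≤ P y)
    (hPw : ∀ᶠ t in 𝓝[>] (0 : ℝ), P (x + t • w) ≤ P x) :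
    subderiv (fun y => F y + P y) x w = L w := by
  have hslope : Tendsto (fun p : ℝ × E => (((F (x + p.1 • p.2) - F x) / p.1 : ℝ) : EReal))
      (𝓝[>] 0 ×ˢ 𝓝 w) (𝓝 (L w)) :=
    (continuous_coe_real_ereal.tendsto _).comp <|
      (hF.tendsto_slope_prod w).mono_left (prod_mono (nhdsGT_le_nhdsNE 0) le_rfl)
  have hpure : 𝓝[>] (0 : ℝ) ×ˢ pure w ≤ 𝓝[>] 0 ×ˢ 𝓝 w := prod_mono le_rfl (pure_le_nhds w)
  refine le_antisymm ?_ ?_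
  · have hle : ∀ᶠ p : ℝ × E in 𝓝[>] 0 ×ˢ pure w,
        (((F (x + p.1 • p.2) + P (x + p.1 • p.2) - (F x + P x)) / p.1 : ℝ) : EReal)
          ≤ (((F (x + p.1 • p.2) - F x) / p.1 : ℝ) : EReal) := by
      filter_upwards [(hPw.and self_mem_nhdsWithin).prod_mk (eventually_pure.2 rfl)]
        with ⟨t, v⟩ ⟨⟨hPt, ht⟩, rfl⟩
      rw [EReal.coe_le_coe_iff, add_sub_add_comm, add_div]
      exact add_le_of_nonpos_right (div_nonpos_of_nonpos_of_nonneg (sub_nonpos.2 hPt) ht.le)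
    calc subderiv (fun y => F y + P y) x w
        ≤ liminf _ (𝓝[>] (0 : ℝ) ×ˢ pure w) := liminf_le_liminf_of_le hpure
      _ ≤ _ := liminf_le_liminf hle
      _ = L w := (hslope.mono_left hpure).liminf_eq
  · have hle : ∀ᶠ p : ℝ × E in 𝓝[>] 0 ×ˢ 𝓝 w,
        (((F (x + p.1 • p.2) - F x) / p.1 : ℝ) : EReal)
          ≤ (((F (x + p.1 • p.2) + P (x + p.1 • p.2) - (F x + P x)) / p.1 : ℝ) : EReal) := by
      filter_upwards [(tendsto_add_smul_prod nhdsWithin_le_nhds x w).eventually hP,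
        tendsto_fst.eventually self_mem_nhdsWithin] with p hPp hp
      rw [EReal.coe_le_coe_iff, add_sub_add_comm, add_div]
      exact le_add_of_nonneg_right (div_nonneg (sub_nonneg.2 hPp) hp.le)
    calc (L w : EReal) = liminf _ (𝓝[>] 0 ×ˢ 𝓝 w) := hslope.liminf_eq.symm
      _ ≤ subderiv (fun y => F y + P y) x w := liminf_le_liminf hle

theorem subderiv_add_eq_top_of_hasFDerivAt (hF : HasFDerivAt F L x) {c : ℝ} (hc : 0 < c)
    (hP : ∀ᶠ p : ℝ × E in 𝓝[>] 0 ×ˢ 𝓝 w, P x + c ≤ P (x + p.1 • p.2)) :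
    subderiv (fun y => F y + P y) x w = ⊤ := by
  have hslope : Tendsto (fun p : ℝ × E => (F (x + p.1 • p.2) - F x) / p.1)
      (𝓝[>] 0 ×ˢ 𝓝 w) (𝓝 (L w)) :=
    (hF.tendsto_slope_prod w).mono_left (prod_mono (nhdsGT_le_nhdsNE 0) le_rfl)
  have hblow : Tendsto (fun p : ℝ × E => (F (x + p.1 • p.2) - F x) / p.1 + c * p.1⁻¹)
      (𝓝[>] 0 ×ˢ 𝓝 w) atTop :=
    hslope.add_atTop ((tendsto_inv_nhdsGT_zero.comp tendsto_fst).const_mul_atTop hc)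
  refine Tendsto.liminf_eq (EReal.tendsto_coe_nhds_top_iff.2 (tendsto_atTop_mono' _ ?_ hblow))
  filter_upwards [hP, tendsto_fst.eventually self_mem_nhdsWithin] with p hPp hp
  rw [add_sub_add_comm, add_div, ← div_eq_mul_inv]
  gcongr
  linarith

end Subderivative

section ColumnSupport

variable {α β : Type*}

def colSupport (A : Matrix α β ℝ) : Set β := {j | (fun i => A i j) ≠ 0}

theorem eventually_colSupport_subset [Finite β] (U : Matrix α β ℝ) :
    ∀ᶠ Y in 𝓝 U, colSupport U ⊆ colSupport Y := by
  refine eventually_all.2 fun j => ?_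
  by_cases hj : j ∈ colSupport U
  · exact ((continuous_pi fun i => continuous_id.matrix_elem i j).continuousAt.eventually_ne
      hj).mono fun _ hY _ => hY
  · exact .of_forall fun _ h => absurd h hj

theorem eventually_l20_le [Fintype α] [Fintype β] (U : Matrix α β ℝ) :
    ∀ᶠ Y in 𝓝 U, l20 U ≤ l20 Y :=
  (eventually_colSupport_subset U).mono fun _ h => Set.ncard_le_ncard h (Set.toFinite _)

theorem colSupport_add_smul_subset (U G : Matrix α β ℝ) (t : ℝ) :
    colSupport (U + t • G) ⊆ colSupport U ∪ colSupport G := by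
  intro j hj
  by_contra h
  simp only [colSupport, Set.mem_union, Set.mem_ofPred_eq, not_or, not_not] at h hj
  exact hj (funext fun i => by simp [congrFun h.1 i, congrFun h.2 i])

theorem l20_add_smul_le [Fintype α] [Fintype β] {U G : Matrix α β ℝ}
    (h : colSupport G ⊆ colSupport U) (t : ℝ) :
    l20 (U + t • G) ≤ l20 U :=
  Set.ncard_le_ncard ((colSupport_add_smul_subset U G t).trans (Set.union_subset le_rfl h))
    (Set.toFinite _)

theorem eventually_l20_le_add_smul [Fintype α] [Fintype β] (U G : Matrix α β ℝ) :
    ∀ᶠ p : ℝ × Matrix α β ℝ in 𝓝[≠] 0 ×ˢ 𝓝 G, l20 U ≤ l20 (U + p.1 • p.2) :=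
  (tendsto_add_smul_prod nhdsWithin_le_nhds U G).eventually (eventually_l20_le U)

theorem eventually_l20_lt_add_smul [Fintype α] [Fintype β] {U G : Matrix α β ℝ}
    (h : ¬ colSupport G ⊆ colSupport U) :
    ∀ᶠ p : ℝ × Matrix α β ℝ in 𝓝[≠] 0 ×ˢ 𝓝 G, l20 U < l20 (U + p.1 • p.2) := by
  obtain ⟨j, hjG, hjU⟩ := Set.not_subset.1 h
  filter_upwards [(tendsto_add_smul_prod nhdsWithin_le_nhds U G).eventually
      (eventually_colSupport_subset U),
    tendsto_snd.eventually ((eventually_colSupport_subset G).mono fun _ h => h hjG),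
    tendsto_fst.eventually self_mem_nhdsWithin] with p hsub hj ht
  refine Set.ncard_lt_ncard ⟨hsub, fun hsup => hjU (hsup ?_)⟩ (Set.toFinite _)
  simp only [colSupport, Set.mem_ofPred_eq, not_not] at hjU hj ⊢
  intro hzero
  refine hj (funext fun i => ?_)
  simpa [congrFun hjU i, show p.1 ≠ 0 from ht] using congrFun hzero i

end ColumnSupport

section Penalty

variable {α β γ : Type*} [Fintype α] [Fintype β] [Fintype γ] {lam : ℝ}

noncomputable def colPenalty (lam : ℝ) (p : Matrix α γ ℝ × Matrix β γ ℝ) : ℝ :=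
  lam * ((l20 p.1 : ℝ) + l20 p.2)

theorem eventually_colPenalty_le (hlam : 0 ≤ lam) (U : Matrix α γ ℝ) (V : Matrix β γ ℝ) :
    ∀ᶠ p in 𝓝 (U, V), colPenalty lam (U, V) ≤ colPenalty lam p := by
  filter_upwards [(eventually_l20_le U).prod_nhds (eventually_l20_le V)] with p ⟨hU, hV⟩
  unfold colPenalty
  gcongr

theorem colPenalty_add_smul_le (hlam : 0 ≤ lam) {U G : Matrix α γ ℝ} {V H : Matrix β γ ℝ}
    (hGU : colSupport G ⊆ colSupport U) (hHV : colSupport H ⊆ colSupport V) (t : ℝ) :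
    colPenalty lam ((U, V) + t • (G, H)) ≤ colPenalty lam (U, V) := by
  unfold colPenalty
  gcongr <;> exact l20_add_smul_le ‹_› t

theorem eventually_colPenalty_add_le (hlam : 0 ≤ lam) {U G : Matrix α γ ℝ} {V H : Matrix β γ ℝ}
    (h : ¬ (colSupport G ⊆ colSupport U ∧ colSupport H ⊆ colSupport V)) :
    ∀ᶠ p : ℝ × (Matrix α γ ℝ × Matrix β γ ℝ) in 𝓝[>] 0 ×ˢ 𝓝 (G, H),
      colPenalty lam (U, V) + lam ≤ colPenalty lam ((U, V) + p.1 • p.2) := by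
  have ht : Tendsto (fun p : ℝ × (Matrix α γ ℝ × Matrix β γ ℝ) => p.1)
      (𝓝[>] 0 ×ˢ 𝓝 (G, H)) (𝓝[≠] 0) :=
    tendsto_fst.mono_right (nhdsGT_le_nhdsNE 0)
  have hU : Tendsto (fun p : ℝ × (Matrix α γ ℝ × Matrix β γ ℝ) => (p.1, p.2.1))
      (𝓝[>] 0 ×ˢ 𝓝 (G, H)) (𝓝[≠] 0 ×ˢ 𝓝 G) :=
    ht.prodMk ((continuous_fst.tendsto _).comp tendsto_snd)
  have hV : Tendsto (fun p : ℝ × (Matrix α γ ℝ × Matrix β γ ℝ) => (p.1, p.2.2))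
      (𝓝[>] 0 ×ˢ 𝓝 (G, H)) (𝓝[≠] 0 ×ˢ 𝓝 H) :=
    ht.prodMk ((continuous_snd.tendsto _).comp tendsto_snd)
  suffices ∀ᶠ p : ℝ × (Matrix α γ ℝ × Matrix β γ ℝ) in 𝓝[>] 0 ×ˢ 𝓝 (G, H),
      l20 U + l20 V + 1 ≤ l20 (U + p.1 • p.2.1) + l20 (V + p.1 • p.2.2) by
    filter_upwards [this] with p hp
    have hp' : (l20 U : ℝ) + l20 V + 1 ≤ l20 (U + p.1 • p.2.1) + l20 (V + p.1 • p.2.2) := by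
      exact_mod_cast hp
    unfold colPenalty
    calc lam * ((l20 U : ℝ) + l20 V) + lam = lam * ((l20 U : ℝ) + l20 V + 1) := by ring
      _ ≤ _ := mul_le_mul_of_nonneg_left hp' hlam
  rcases not_and_or.1 h with hGU | hHV
  · filter_upwards [hU.eventually (eventually_l20_lt_add_smul hGU),
      hV.eventually (eventually_l20_le_add_smul V H)] with p h1 h2
    omega
  · filter_upwards [hU.eventually (eventually_l20_le_add_smul U G),
      hV.eventually (eventually_l20_lt_add_smul hHV)] with p h1 h2
    omega

end Penalty

theorem subderiv_Phi_general {n m r : ℕ}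
    (f : Matrix (Fin n) (Fin m) ℝ → ℝ) (f' : Matrix (Fin n) (Fin m) ℝ → Matrix (Fin n) (Fin m) ℝ)
    (hdiff : Differentiable ℝ f)
    (hgrad : ∀ X H, fderiv ℝ f X H = frobInner (f' X) H)
    (lam mu : ℝ) (hlam : 0 < lam)
    (Ubar : Matrix (Fin n) (Fin r) ℝ) (Vbar : Matrix (Fin m) (Fin r) ℝ)
    (G : Matrix (Fin n) (Fin r) ℝ) (H : Matrix (Fin m) (Fin r) ℝ) :
    (((∀ j : Fin r, (fun i => G i j) ≠ 0 → (fun i => Ubar i j) ≠ 0) ∧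
        (∀ j : Fin r, (fun i => H i j) ≠ 0 → (fun i => Vbar i j) ≠ 0)) →
      subderiv (fun p : Matrix (Fin n) (Fin r) ℝ × Matrix (Fin m) (Fin r) ℝ =>
          Phi f lam mu p.1 p.2) (Ubar, Vbar) (G, H) =
        ((frobInner (f' (Ubar * Vbarᵀ) * Vbar + mu • Ubar) G +
            frobInner ((f' (Ubar * Vbarᵀ))ᵀ * Ubar + mu • Vbar) H : ℝ) : EReal)) ∧
    (¬ ((∀ j : Fin r, (fun i => G i j) ≠ 0 → (fun i => Ubar i j) ≠ 0) ∧
        (∀ j : Fin r, (fun i => H i j) ≠ 0 → (fun i => Vbar i j) ≠ 0)) →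
      subderiv (fun p : Matrix (Fin n) (Fin r) ℝ × Matrix (Fin m) (Fin r) ℝ =>
          Phi f lam mu p.1 p.2) (Ubar, Vbar) (G, H) = ⊤) ∧
    (subderiv (fun p : Matrix (Fin n) (Fin r) ℝ × Matrix (Fin m) (Fin r) ℝ =>
          Phi f lam mu p.1 p.2) (Ubar, Vbar) (G, H) < 0 →
      frobInner (f' (Ubar * Vbarᵀ) * Vbar + mu • Ubar) G +
          frobInner ((f' (Ubar * Vbarᵀ))ᵀ * Ubar + mu • Vbar) H < 0) := by
  have hf : HasFDerivAt f (frobInnerL (f' (Ubar * Vbarᵀ))) (Ubar * Vbarᵀ) := by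
    simpa only [show fderiv ℝ f _ = frobInnerL _ from ContinuousLinearMap.ext (hgrad _)]
      using (hdiff (Ubar * Vbarᵀ)).hasFDerivAt
  have hF := hasFDerivAt_Fmu mu hf
  have hfinite : colSupport G ⊆ colSupport Ubar ∧ colSupport H ⊆ colSupport Vbar → _ :=
    fun ⟨hGU, hHV⟩ => subderiv_add_eq_of_hasFDerivAt hF (eventually_colPenalty_le hlam.le _ _)
      (.of_forall (colPenalty_add_smul_le hlam.le hGU hHV))
  have hinfinite : ¬ (colSupport G ⊆ colSupport Ubar ∧ colSupport H ⊆ colSupport Vbar) → _ :=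
    fun h => subderiv_add_eq_top_of_hasFDerivAt hF hlam (eventually_colPenalty_add_le hlam.le h)
  refine ⟨hfinite, hinfinite, fun hneg => ?_⟩
  have hsupp := not_not.1 fun h => hneg.not_ge (hinfinite h ▸ le_top)
  exact_mod_cast hfinite hsupp ▸ hneg

/-- the subderivative of `Φ_{λ,μ}` at `(Ū,V̄)` in a direction `(G,H)`
equals `⟨∇f(ŪV̄ᵀ)V̄ + μŪ, G⟩ + ⟨(∇f(ŪV̄ᵀ))ᵀŪ + μV̄, H⟩` when `J_G ⊆ J_Ū` and `J_H ⊆ J_V̄`,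
and `+∞` otherwise; consequently a direction of negative subderivative is a descent
direction of `F_μ` at `(Ū,V̄)`. -/
theorem subderiv_Phi {n m r : ℕ}
    (f : Matrix (Fin n) (Fin m) ℝ → ℝ) (f' : Matrix (Fin n) (Fin m) ℝ → Matrix (Fin n) (Fin m) ℝ)
    (hdiff : Differentiable ℝ f)
    (hgrad : ∀ X H, fderiv ℝ f X H = frobInner (f' X) H)
    (hcont : Continuous f')
    (lam mu : ℝ) (hlam : 0 < lam) (hmu : 0 < mu)
    (Ubar : Matrix (Fin n) (Fin r) ℝ) (Vbar : Matrix (Fin m) (Fin r) ℝ)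
    (G : Matrix (Fin n) (Fin r) ℝ) (H : Matrix (Fin m) (Fin r) ℝ) :
    (((∀ j : Fin r, (fun i => G i j) ≠ 0 → (fun i => Ubar i j) ≠ 0) ∧
        (∀ j : Fin r, (fun i => H i j) ≠ 0 → (fun i => Vbar i j) ≠ 0)) →
      subderiv (fun p : Matrix (Fin n) (Fin r) ℝ × Matrix (Fin m) (Fin r) ℝ =>
          Phi f lam mu p.1 p.2) (Ubar, Vbar) (G, H) =
        ((frobInner (f' (Ubar * Vbarᵀ) * Vbar + mu • Ubar) G +
            frobInner ((f' (Ubar * Vbarᵀ))ᵀ * Ubar + mu • Vbar) H : ℝ) : EReal)) ∧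
    (¬ ((∀ j : Fin r, (fun i => G i j) ≠ 0 → (fun i => Ubar i j) ≠ 0) ∧
        (∀ j : Fin r, (fun i => H i j) ≠ 0 → (fun i => Vbar i j) ≠ 0)) →
      subderiv (fun p : Matrix (Fin n) (Fin r) ℝ × Matrix (Fin m) (Fin r) ℝ =>
          Phi f lam mu p.1 p.2) (Ubar, Vbar) (G, H) = ⊤) ∧
    (subderiv (fun p : Matrix (Fin n) (Fin r) ℝ × Matrix (Fin m) (Fin r) ℝ =>
          Phi f lam mu p.1 p.2) (Ubar, Vbar) (G, H) < 0 →
      frobInner (f' (Ubar * Vbarᵀ) * Vbar + mu • Ubar) G +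
          frobInner ((f' (Ubar * Vbarᵀ))ᵀ * Ubar + mu • Vbar) H < 0) :=
  subderiv_Phi_general f f' hdiff hgrad lam mu hlam Ubar Vbar G H
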